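/- arXiv:2405.14254 — 10 statements merged into one kernel-verified Lean document; each statement's English description precedes it below -/
import Mathlib

section
/- Let G be an undirected unweighted graph with girth greater than k, let α ≥ 1 be a real and δ = ⌊k/(α+1)⌋. If u, v are vertices with d_G(u,v) = δ, then there is a unique shortest path P between u and v, and moreover every walk from u to v of length at most α·δ contains all edges of P. -/
open SimpleGraph Walk

lemma cycle_of_two_paths {V : Type*} [DecidableEq V] {G : SimpleGraph V} :
    ∀ (n : ℕ) {u v : V} (p q : G.Walk u v), p.length ≤ n → p.IsPath → q.IsPath → p ≠ q →
      ∃ (a : V) (c : G.Walk a a), c.IsCycle ∧ c.length ≤ p.length + q.length := by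
  intro n
  induction n with
  | zero =>
    intro u v p q hlen hp hq hne
    cases p with
    | nil =>
      rw [Walk.isPath_iff_eq_nil] at hq
      exact absurd hq.symm hne
    | cons h p' => simp at hlen
  | succ n ih =>
    intro u v p q hlen hp hq hne
    cases p with
    | nil =>
      rw [Walk.isPath_iff_eq_nil] at hq
      exact absurd hq.symm hne
    | @cons _ a _ hpa p' =>
      cases q with
      | nil =>
        rw [Walk.isPath_iff_eq_nil] at hp
        exact absurd hp hne
      | @cons _ b _ hqb q' =>
        rw [Walk.cons_isPath_iff] at hp hq
        by_cases hab : a = b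
        · subst hab
          have hne' : p' ≠ q' := fun h => hne (by rw [h])
          obtain ⟨x, c, hc, hcl⟩ := ih p' q' (by simpa using hlen) hp.1 hq.1 hne'
          exact ⟨x, c, hc, by simp only [Walk.length_cons]; omega⟩
        · by_cases hmem : a ∈ (Walk.cons hqb q').support
          · by_cases hdrop : (Walk.cons hqb q').dropUntil a hmem = p'
            · cases p' with
              | nil =>
                -- a = v, direct cycle: cons hpa (cons hqb q').reverse
                refine ⟨u, Walk.cons hpa (Walk.cons hqb q').reverse, ?_, ?_⟩
                · rw [Walk.cons_isCycle_iff]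
                  refine ⟨(Walk.IsPath.reverse (by rw [Walk.cons_isPath_iff]; exact hq)), ?_⟩
                  rw [Walk.edges_reverse, List.mem_reverse]
                  intro hmem'
                  rw [Walk.edges_cons, List.mem_cons] at hmem'
                  rcases hmem' with h1 | h2
                  · rw [Sym2.eq_iff] at h1
                    rcases h1 with ⟨_, h1⟩ | ⟨h1, h2⟩
                    · exact hab h1
                    · exact hqb.ne h1
                  · exact hq.2 (q'.fst_mem_support_of_mem_edges h2)
                · simp [Walk.length_reverse]
              | cons hrel p'' =>
                -- recurse with (cons hpa nil, takeUntil)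
                have hne2 : (Walk.cons hpa Walk.nil : G.Walk u a) ≠
                    (Walk.cons hqb q').takeUntil a hmem := by
                  intro heq
                  have hspec := (Walk.cons hqb q').take_spec hmem
                  rw [← heq] at hspec
                  simp only [Walk.cons_append, Walk.nil_append] at hspec
                  have hsup := congrArg Walk.support hspec
                  rw [Walk.support_cons, Walk.support_cons] at hsup
                  have := List.cons.injEq u _ u _ ▸ hsup
                  have h2 : ((Walk.cons hqb q').dropUntil a hmem).support = q'.support :=
                    (List.cons_injective.eq_iff.mp hsup)
                  have ha := ((Walk.cons hqb q').dropUntil a hmem).support_eq_cons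
                  have hb := q'.support_eq_cons
                  rw [h2, hb] at ha
                  exact hab (List.head_eq_of_cons_eq ha.symm)
                have h1path : (Walk.cons hpa Walk.nil : G.Walk u a).IsPath := by
                  rw [Walk.cons_isPath_iff]
                  exact ⟨Walk.IsPath.nil, by simp [hpa.ne]⟩
                have htpath : ((Walk.cons hqb q').takeUntil a hmem).IsPath :=
                  Walk.IsPath.takeUntil (by rw [Walk.cons_isPath_iff]; exact hq) hmem
                have hlen1 : (Walk.cons hpa Walk.nil : G.Walk u a).length ≤ n := by
                  simp only [Walk.length_cons, Walk.length_nil]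
                  have : (Walk.cons hpa (Walk.cons hrel p'')).length ≤ n + 1 := hlen
                  simp only [Walk.length_cons] at this
                  omega
                obtain ⟨x, c, hc, hcl⟩ := ih _ _ hlen1 h1path htpath hne2
                refine ⟨x, c, hc, ?_⟩
                have := Walk.length_takeUntil_le (Walk.cons hqb q') hmem
                simp only [Walk.length_cons, Walk.length_nil] at this hcl ⊢
                omega
            · -- recurse with (p', dropUntil)
              have hdpath : ((Walk.cons hqb q').dropUntil a hmem).IsPath :=
                Walk.IsPath.dropUntil (by rw [Walk.cons_isPath_iff]; exact hq) hmem
              obtain ⟨x, c, hc, hcl⟩ := ih p' _ (by simpa using hlen) hp.1 hdpath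
                (fun h => hdrop h.symm)
              refine ⟨x, c, hc, ?_⟩
              have := Walk.length_dropUntil_le (Walk.cons hqb q') hmem
              simp only [Walk.length_cons] at this hcl ⊢
              omega
          · -- recurse with (p', cons hpa.symm (cons hqb q'))
            have hqpath : (Walk.cons hpa.symm (Walk.cons hqb q')).IsPath := by
              rw [Walk.cons_isPath_iff]
              exact ⟨by rw [Walk.cons_isPath_iff]; exact hq, hmem⟩
            have hne2 : p' ≠ Walk.cons hpa.symm (Walk.cons hqb q') := by
              intro heq
              have : u ∈ p'.support := by
                rw [heq]
                simp [Walk.support_cons]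
              exact hp.2 this
            obtain ⟨x, c, hc, hcl⟩ := ih p' _ (by simpa using hlen) hp.1 hqpath hne2
            refine ⟨x, c, hc, ?_⟩
            simp only [Walk.length_cons] at hcl ⊢
            omega

/-- In a graph of girth greater than `k`, for `α ≥ 1` and `δ = ⌊k/(α+1)⌋`,
any pair of vertices at distance exactly `δ` has a unique shortest path `P`
(equivalently, a unique walk of length `δ`), and every walk between them of
length at most `α·δ` contains every edge of `P`. -/
theorem stmt0 {V : Type*} [Fintype V] (G : SimpleGraph V)
    (k : ℕ) (hk : 0 < k) (α : ℝ) (hα : 1 ≤ α) (hkα : α + 1 ≤ (k : ℝ))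
    (hgirth : (k : ℕ∞) < G.girth)
    (δ : ℕ) (hδ : δ = ⌊(k : ℝ) / (α + 1)⌋₊)
    (u v : V) (hdist : G.dist u v = δ) (hreach : G.Reachable u v) :
    (∃! P : G.Walk u v, P.length = δ) ∧
      ∀ P : G.Walk u v, P.length = δ →
        ∀ W : G.Walk u v, (W.length : ℝ) ≤ α * δ →
          ∀ e ∈ P.edges, e ∈ W.edges := by
  classical
  have hα1 : (0:ℝ) < α + 1 := by linarith
  have hfloor : ((δ:ℝ)) ≤ (k:ℝ)/(α+1) := by
    rw [hδ]; exact Nat.floor_le (by positivity)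
  have hδk : (δ:ℝ) * (α+1) ≤ k := by
    have := mul_le_mul_of_nonneg_right hfloor (le_of_lt hα1)
    rwa [div_mul_cancel₀ _ (ne_of_gt hα1)] at this
  -- every cycle has length > k
  have hgirthN : ∀ (a : V) (c : G.Walk a a), c.IsCycle → k < c.length := by
    intro a c hc
    have h1 : G.egirth ≤ c.length := SimpleGraph.le_egirth.mp le_rfl a c hc
    have htop : G.egirth ≠ ⊤ := by
      intro h
      rw [h] at h1
      exact absurd (top_le_iff.mp h1).symm (by simp)
    obtain ⟨m, hm⟩ := WithTop.ne_top_iff_exists.mp htop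
    have hg : G.girth = m := by
      rw [SimpleGraph.girth, ← hm]; exact ENat.toNat_coe m
    rw [hg] at hgirth
    have hkm : k < m := by exact_mod_cast hgirth
    have hmc : m ≤ c.length := by rw [← hm] at h1; exact Nat.cast_le.mp h1
    omega
  -- key uniqueness engine
  have key : ∀ (P Q : G.Walk u v), P.IsPath → Q.IsPath →
      ((P.length : ℝ) + (Q.length : ℝ) ≤ (k : ℝ)) → P = Q := by
    intro P Q hP hQ hsum
    by_contra hne
    obtain ⟨a, c, hc, hcl⟩ := cycle_of_two_paths P.length P Q le_rfl hP hQ hne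
    have h1 := hgirthN a c hc
    have h2 : ((c.length : ℝ)) ≤ (k : ℝ) := le_trans (by exact_mod_cast hcl) hsum
    have h3 : c.length ≤ k := by exact_mod_cast h2
    omega
  have hδnn : (0:ℝ) ≤ (δ:ℝ) := Nat.cast_nonneg δ
  have hpath : ∀ P : G.Walk u v, P.length = δ → P.IsPath := fun P hP =>
    P.isPath_of_length_eq_dist (hP.trans hdist.symm)
  constructor
  · obtain ⟨P0, hP0, hP0len⟩ := hreach.exists_path_of_dist
    refine ⟨P0, hP0len.trans hdist, ?_⟩
    intro Q hQ
    apply key Q P0 (hpath Q hQ) hP0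
    rw [hQ, hP0len, hdist]
    have : (δ:ℝ) + (δ:ℝ) ≤ (δ:ℝ) * (α+1) := by nlinarith
    linarith
  · intro P hP W hW e he
    by_contra heW
    have hW' : W.bypass.IsPath := W.bypass_isPath
    have heW' : e ∉ W.bypass.edges := fun h => heW (W.edges_bypass_subset h)
    have hPW : P = W.bypass := by
      apply key P W.bypass (hpath P hP) hW'
      have h1 : (W.bypass.length : ℝ) ≤ (W.length : ℝ) := by
        exact_mod_cast W.length_bypass_le
      rw [hP]
      have : (δ:ℝ) + α * δ = (δ:ℝ) * (α+1) := by ring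
      linarith
    rw [hPW] at he
    exact heW' he
end

section
/- Let G be a graph with girth greater than k, let α ≥ 1, δ = ⌊k/(α+1)⌋ ≥ 1, and let 𝒫 be a set of pairs of vertices each at distance exactly δ. If S is a spanning subgraph of G such that for every pair (u,v) ∈ 𝒫 we have d_S(u,v) ≤ α·d_G(u,v), then S contains every edge of the unique shortest u-v path in G, for every (u,v) ∈ 𝒫. -/
open SimpleGraph

private lemma key_lemma {V : Type*} {G : SimpleGraph V} {k : ℕ}
    (hg : (k : ℕ∞) < G.egirth) :
    ∀ {u v : V} (P : G.Walk u v), P.IsPath → ∀ e ∈ P.edges,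
      ∀ (R : G.Walk u v), P.length + R.length ≤ k → e ∈ R.edges := by
  intro u v P
  have : DecidableEq V := Classical.decEq V
  induction P with
  | nil => simp
  | @cons u b v h P' ih =>
    intro hP e he R hlen
    rw [SimpleGraph.Walk.cons_isPath_iff] at hP
    have hnP' : s(u, b) ∉ P'.edges := fun hmem => hP.2 (P'.fst_mem_support_of_mem_edges hmem)
    rw [SimpleGraph.Walk.edges_cons, List.mem_cons] at he
    rcases he with he | he
    · -- e = s(u,b)
      subst he
      by_contra he'
      set Q : G.Walk b u := P'.append R.reverse with hQ
      have hQe : s(u, b) ∉ Q.edges := by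
        rw [hQ, SimpleGraph.Walk.edges_append, List.mem_append]
        rintro (h1 | h2)
        · exact hnP' h1
        · rw [SimpleGraph.Walk.edges_reverse, List.mem_reverse] at h2
          exact he' h2
      have hbe : s(u, b) ∉ Q.bypass.edges := fun hmem => hQe (Q.edges_bypass_subset hmem)
      have hC : (SimpleGraph.Walk.cons h Q.bypass).IsCycle := by
        rw [SimpleGraph.Walk.cons_isCycle_iff]
        exact ⟨Q.bypass_isPath, hbe⟩
      have hlenC : (SimpleGraph.Walk.cons h Q.bypass).length ≤ k := by
        have h1 := Q.length_bypass_le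
        have h2 : Q.length = P'.length + R.length := by
          rw [hQ, SimpleGraph.Walk.length_append, SimpleGraph.Walk.length_reverse]
        simp only [SimpleGraph.Walk.length_cons]
        simp only [SimpleGraph.Walk.length_cons] at hlen
        omega
      have h3 : G.egirth ≤ (SimpleGraph.Walk.cons h Q.bypass).length :=
        SimpleGraph.le_egirth.mp le_rfl u _ hC
      have h4 : (k : ℕ∞) < ((SimpleGraph.Walk.cons h Q.bypass).length : ℕ∞) :=
        lt_of_lt_of_le hg h3
      rw [Nat.cast_lt] at h4
      omega
    · -- e ∈ P'.edges
      have hR' : P'.length + (SimpleGraph.Walk.cons h.symm R).length ≤ k := by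
        simp only [SimpleGraph.Walk.length_cons] at hlen ⊢
        omega
      have := ih hP.1 e he (SimpleGraph.Walk.cons h.symm R) hR'
      rw [SimpleGraph.Walk.edges_cons, List.mem_cons] at this
      rcases this with h1 | h2
      · exfalso
        rw [Sym2.eq_swap] at h1
        subst h1
        exact hnP' he
      · exact h2

private lemma edges_mapLe_aux {V : Type*} {S G : SimpleGraph V} (h : S ≤ G) {u v : V}
    (W : S.Walk u v) : (W.mapLe h).edges = W.edges := by
  induction W with
  | nil => rfl
  | cons ha W ih =>
    simp only [SimpleGraph.Walk.mapLe, SimpleGraph.Walk.map_cons,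
      SimpleGraph.Walk.edges_cons] at *
    rw [ih]
    rfl

/-- Let `G` have girth greater than `k`, `α ≥ 1`, `δ = ⌊k/(α+1)⌋ ≥ 1`, and let
`Pset` be a set of pairs of vertices each at distance exactly `δ`. If `S` is a
spanning subgraph of `G` in which every pair of `Pset` is joined by a walk of
length at most `α` times its `G`-distance, then `S` contains every edge of the
unique shortest path in `G` between each pair of `Pset`. -/
theorem stmt4 {V : Type*} [Fintype V] (G S : SimpleGraph V) (hSG : S ≤ G)
    (k : ℕ) (α : ℝ) (hα : 1 ≤ α) (hkα : α + 1 ≤ (k : ℝ))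
    (hgirth : (k : ℕ∞) < G.girth)
    (δ : ℕ) (hδ : δ = ⌊(k : ℝ) / (α + 1)⌋₊) (hδ1 : 1 ≤ δ)
    (Pset : Set (V × V)) (hPset : ∀ q ∈ Pset, G.dist q.1 q.2 = δ)
    (hstretch : ∀ q ∈ Pset, ∃ W : S.Walk q.1 q.2,
        (W.length : ℝ) ≤ α * (G.dist q.1 q.2 : ℝ)) :
    ∀ q ∈ Pset, ∀ P : G.Walk q.1 q.2, P.length = δ →
      ∀ e ∈ P.edges, e ∈ S.edgeSet := by
  have hge : (k : ℕ∞) < G.egirth :=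
    lt_of_lt_of_le hgirth (ENat.coe_toNat_le_self _)
  intro q hq P hPlen e he
  obtain ⟨W, hW⟩ := hstretch q hq
  have hdist := hPset q hq
  have hPpath : P.IsPath := P.isPath_of_length_eq_dist (by rw [hPlen, hdist])
  -- length bound
  have hα1 : (0:ℝ) < α + 1 := by linarith
  have hdle : (δ : ℝ) ≤ (k : ℝ) / (α + 1) := by
    rw [hδ]
    exact Nat.floor_le (by positivity)
  have hWlen : (W.length : ℝ) ≤ α * δ := by
    rw [hdist] at hW
    exact_mod_cast hW
  have hsum : (δ : ℝ) + (W.length : ℝ) ≤ (k : ℝ) := by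
    have hcancel : (α + 1) * ((k:ℝ) / (α + 1)) = (k:ℝ) :=
      mul_div_cancel₀ _ (ne_of_gt hα1)
    nlinarith
  have hsumN : δ + W.length ≤ k := by exact_mod_cast hsum
  -- map W into G
  set R : G.Walk q.1 q.2 := W.mapLe hSG with hR
  have hRlen : R.length = W.length := by simp [hR, SimpleGraph.Walk.mapLe]
  have hkey : e ∈ R.edges :=
    key_lemma hge P hPpath e he R (by omega)
  rw [edges_mapLe_aux hSG W] at hkey
  exact W.edges_subset_edgeSet hkey
end

section
/- Define a sequence λ by λ_0 = 1 and λ_i = 1 + Σ_{l < f⁻¹(i)} λ_l, where f(i) = ⌊i/c⌋·c + c − 1 and f⁻¹(i) = ⌊i/c⌋·c, for a fixed integer c ≥ 1. Then for all integers a ≥ 0 and b with 0 ≤ b ≤ c−1, we have λ_{ac+b} = (c+1)^a. -/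
/-- For `f(i) = ⌊i/c⌋·c + c − 1` one has `f⁻¹(i) = ⌊i/c⌋·c`. If `λ₀ = 1` and
`λ_i = 1 + Σ_{l < f⁻¹(i)} λ_l` for `i ≥ 1`, then `λ_{ac+b} = (c+1)^a` for all
`a ≥ 0` and `0 ≤ b ≤ c−1`. -/
theorem stmt5 (c : ℕ) (hc : 1 ≤ c) (lam : ℕ → ℕ)
    (h0 : lam 0 = 1)
    (hrec : ∀ i, 1 ≤ i → lam i = 1 + ∑ l ∈ Finset.range (i / c * c), lam l) :
    ∀ a b : ℕ, b ≤ c - 1 → lam (a * c + b) = (c + 1) ^ a := by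
  have key : ∀ a : ℕ, (∀ b : ℕ, b ≤ c - 1 → lam (a * c + b) = (c + 1) ^ a) ∧
      (∑ l ∈ Finset.range (a * c), lam l) = (c + 1) ^ a - 1 := by
    intro a
    induction a with
    | zero =>
      constructor
      · intro b hb
        have hbc : b < c := lt_of_le_of_lt hb (Nat.sub_lt hc one_pos)
        rcases Nat.eq_zero_or_pos b with h | h
        · simpa [h] using h0
        · rw [zero_mul, zero_add, hrec b h, Nat.div_eq_of_lt hbc]
          simp
      · simp
    | succ a ih =>
      obtain ⟨ihb, ihs⟩ := ih
      have hsum : (∑ l ∈ Finset.range ((a + 1) * c), lam l) = (c + 1) ^ (a + 1) - 1 := by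
        have : (a + 1) * c = a * c + c := by ring
        rw [this, Finset.sum_range_add, ihs]
        have : ∀ k ∈ Finset.range c, lam (a * c + k) = (c + 1) ^ a := by
          intro k hk
          exact ihb k (Nat.le_sub_one_of_lt (Finset.mem_range.mp hk))
        rw [Finset.sum_congr rfl this, Finset.sum_const, Finset.card_range, smul_eq_mul]
        have hp : 1 ≤ (c + 1) ^ a := Nat.one_le_pow _ _ (by omega)
        have h2 : (c + 1) ^ (a + 1) = (c + 1) ^ a + c * (c + 1) ^ a := by ring
        omega
      refine ⟨?_, hsum⟩
      intro b hb
      have hbc : b < c := lt_of_le_of_lt hb (Nat.sub_lt hc one_pos)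
      have hi : 1 ≤ (a + 1) * c + b := by nlinarith
      have hdiv : ((a + 1) * c + b) / c = a + 1 := by
        rw [add_comm, Nat.add_mul_div_right _ _ hc, Nat.div_eq_of_lt hbc, zero_add]
      rw [hrec _ hi, hdiv, hsum]
      have hp : 1 ≤ (c + 1) ^ (a + 1) := Nat.one_le_pow _ _ (by omega)
      omega
  exact fun a => (key a).1
end

section
/- Let G = (V,E) be a finite graph, A ⊆ V, and for each v ∈ V let p(v) ∈ A be a vertex of A at minimum distance from v, where ties are broken consistently (say by a fixed linear order on A). Then for every v and every vertex x lying on a fixed (consistently chosen) shortest path from v to p(v), it holds that p(x) = p(v). -/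
/-- Abstract form of the consistency of nearest `A`-vertices: `d` is the
shortest-path distance of a finite weighted graph (symmetric, triangle
inequality), `p v` is the vertex of `A` nearest to `v` with ties broken by a
fixed linear order. If `x` lies on a (consistently chosen) shortest path from
`v` to `p v`, i.e. `d v (p v) = d v x + d x (p v)`, then `p x = p v`. -/
theorem stmt7 {V : Type*} [Fintype V] [LinearOrder V]
    (d : V → V → ℝ)
    (hnn : ∀ u v, 0 ≤ d u v)
    (hsymm : ∀ u v, d u v = d v u)
    (htri : ∀ u v w, d u w ≤ d u v + d v w)
    (A : Set V) (hA : A.Nonempty)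
    (p : V → V) (hpA : ∀ v, p v ∈ A)
    (hmin : ∀ v, ∀ a ∈ A, d v (p v) ≤ d v a)
    (htie : ∀ v, ∀ a ∈ A, d v a = d v (p v) → p v ≤ a)
    (v x : V) (hx : d v (p v) = d v x + d x (p v)) :
    p x = p v := by
  have h1 : d x (p x) ≤ d x (p v) := hmin x (p v) (hpA v)
  have h2 : d v (p x) ≤ d v x + d x (p x) := htri v x (p x)
  have h3 : d v (p v) ≤ d v (p x) := hmin v (p x) (hpA x)
  have heq1 : d v (p x) = d v (p v) := by linarith
  have heq2 : d x (p v) = d x (p x) := by linarith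
  exact le_antisymm (htie x (p v) (hpA v) heq2) (htie v (p x) (hpA x) heq1)
end

section
/- Let G = (V,E) be a weighted graph, A ⊆ V nonempty, and suppose S₀ is a subgraph such that d_{S₀}(a,a') ≤ α·d_G(a,a') for all a,a' ∈ A. For v ∈ V let p(v) ∈ A be a nearest vertex of A to v, and let S be the union of S₀ with a shortest v–p(v) path for every v ∈ V. Then for every v ∈ V and a ∈ A, d_S(v,a) ≤ (2α+1)·d_G(v,a). -/
/-- Abstract form of the subset-to-source-wise spanner reduction. `dG` is the
distance of a weighted graph `G` (nonnegative, symmetric, triangle inequality),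
`dS` is the distance in the subgraph `S` obtained from a subgraph `S₀` (with
stretch `α` on the subset `A`) by adding, for every vertex `v`, a shortest path
from `v` to its nearest `A`-vertex `p v` (so `dS v (p v) ≤ dG v (p v)` and `dS`
satisfies the triangle inequality and is bounded by `α·dG` on `A × A`).
Then `dS v a ≤ (2α+1)·dG v a` for every vertex `v` and every `a ∈ A`. -/
theorem stmt8 {V : Type*} [Fintype V]
    (dG dS : V → V → ℝ) (A : Set V) (hA : A.Nonempty) (α : ℝ) (hα : 1 ≤ α)
    (hGnn : ∀ x y, 0 ≤ dG x y)
    (hGsymm : ∀ x y, dG x y = dG y x)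
    (hGtri : ∀ x y z, dG x z ≤ dG x y + dG y z)
    (hStri : ∀ x y z, dS x z ≤ dS x y + dS y z)
    (p : V → V) (hpA : ∀ v, p v ∈ A)
    (hpmin : ∀ v, ∀ a ∈ A, dG v (p v) ≤ dG v a)
    (hpath : ∀ v, dS v (p v) ≤ dG v (p v))
    (hS0 : ∀ a ∈ A, ∀ a' ∈ A, dS a a' ≤ α * dG a a') :
    ∀ v : V, ∀ a ∈ A, dS v a ≤ (2 * α + 1) * dG v a := by
  intro v a ha
  have h1 : dS v a ≤ dS v (p v) + dS (p v) a := hStri v (p v) a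
  have h2 : dS (p v) a ≤ α * dG (p v) a := hS0 (p v) (hpA v) a ha
  have h3 : dG (p v) a ≤ dG (p v) v + dG v a := hGtri (p v) v a
  have h4 : dG v (p v) ≤ dG v a := hpmin v a ha
  have h5 : dG (p v) v = dG v (p v) := (hGsymm v (p v)).symm
  nlinarith [hpath v, hGnn v a]
end

section
/- Let G be a weighted graph and H a set of vertex pairs (a 'hopset') such that for every pair (u,v) in a set 𝒫 there is a path P_{u,v} in G ∪ H with at most β edges and total weight at most α·d_G(u,v) (edges of H having weight equal to the G-distance of their endpoints). Let S ⊆ E(G) be a subgraph satisfying d_S(x,y) ≤ t·d_G(x,y) for every (x,y) ∈ H. Then the subgraph R = S ∪ ⋃_{(u,v)∈𝒫}(P_{u,v} ∩ E(G)) satisfies d_R(u,v) ≤ t·α·d_G(u,v) for every (u,v) ∈ 𝒫, and |E(R)| ≤ β·|𝒫| + |E(S)|. -/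
lemma chain_bound {V : Type*} (dR : V → V → ℝ)
    (hRtri : ∀ x y z, dR x z ≤ dR x y + dR y z)
    (hRrefl : ∀ x, dR x x = 0) :
    ∀ (l : List V) (a b : V), l.head? = some a → l.getLast? = some b →
      dR a b ≤ ((l.zip l.tail).map (fun s => dR s.1 s.2)).sum := by
  intro l
  induction l with
  | nil => intro a b h; simp at h
  | cons x xs ih =>
    intro a b ha hb
    simp at ha; subst ha
    cases xs with
    | nil =>
      simp at hb; subst hb; simp [hRrefl]
    | cons y ys =>
      have hb' : (y :: ys).getLast? = some b := by
        rwa [List.getLast?_cons_cons] at hb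
      have := ih y b (by simp) hb'
      calc dR x b ≤ dR x y + dR y b := hRtri x y b
        _ ≤ dR x y + (((y::ys).zip (y::ys).tail).map (fun s => dR s.1 s.2)).sum := by linarith
        _ = _ := by simp

/-- Combining a hopset with a low-stretch pairwise spanner. `G` is a weighted
graph with edge set `EG`, positive weights `w` and shortest-path distance `dG`;
`H` is a hopset: for every pair `q ∈ Pset` there is a path `P q` in `G ∪ H`
(given as a list of vertices, each consecutive step an edge of `G` or of `H`)
with at most `β` edges and total weight at most `α·dG q.1 q.2`, where an `H`
edge `(x,y)` has weight `dG x y`. `S` is a subgraph of `G` (edge set `ES`) with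
`dS(x,y) ≤ t·dG(x,y)` for every `(x,y) ∈ H`. Then in the subgraph
`R = S ∪ ⋃_{q ∈ Pset} (P q ∩ EG)` (whose distance `dR` satisfies the triangle
inequality, vanishes on the diagonal, and is bounded by the weight of each of
its edges, and by `t·dG` on `H` since `S ⊆ R`), every pair `q ∈ Pset` satisfies
`dR q.1 q.2 ≤ t·α·dG q.1 q.2`, and `|E(R)| ≤ β·|Pset| + |E(S)|`. -/
theorem stmt9 {V : Type*} [Fintype V] [DecidableEq V]
    (w dG : V → V → ℝ) (hw : ∀ x y, 0 ≤ w x y) (hdG : ∀ x y, 0 ≤ dG x y)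
    (EG ES : Finset (V × V)) (hES : ES ⊆ EG)
    (H Pset : Finset (V × V))
    (α t : ℝ) (hα : 1 ≤ α) (ht : 1 ≤ t) (β : ℕ)
    (P : V × V → List V)
    (hP : ∀ q ∈ Pset,
      (P q).head? = some q.1 ∧ (P q).getLast? = some q.2 ∧
      (P q).length ≤ β + 1 ∧
      (∀ s ∈ (P q).zip (P q).tail, s ∈ EG ∨ s ∈ H) ∧
      (((P q).zip (P q).tail).map
          (fun s => if s ∈ H then dG s.1 s.2 else w s.1 s.2)).sum
        ≤ α * dG q.1 q.2)
    (dR : V → V → ℝ)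
    (hRtri : ∀ x y z, dR x z ≤ dR x y + dR y z)
    (hRrefl : ∀ x, dR x x = 0)
    (hRS : ∀ s ∈ ES, dR s.1 s.2 ≤ w s.1 s.2)
    (hRP : ∀ q ∈ Pset, ∀ s ∈ ((P q).zip (P q).tail).toFinset ∩ EG,
        dR s.1 s.2 ≤ w s.1 s.2)
    (hRH : ∀ s ∈ H, dR s.1 s.2 ≤ t * dG s.1 s.2) :
    (∀ q ∈ Pset, dR q.1 q.2 ≤ t * α * dG q.1 q.2) ∧
    (ES ∪ Pset.biUnion (fun q => ((P q).zip (P q).tail).toFinset ∩ EG)).card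
      ≤ β * Pset.card + ES.card := by
  constructor
  · intro q hq
    obtain ⟨h1, h2, h3, h4, h5⟩ := hP q hq
    have key := chain_bound dR hRtri hRrefl (P q) q.1 q.2 h1 h2
    have pw : ∀ s ∈ (P q).zip (P q).tail,
        dR s.1 s.2 ≤ t * (if s ∈ H then dG s.1 s.2 else w s.1 s.2) := by
      intro s hs
      by_cases hH : s ∈ H
      · simpa [hH] using hRH s hH
      · rcases h4 s hs with hEG | hH'
        · have h6 := hRP q hq s (by
            simp [Finset.mem_inter, List.mem_toFinset, hs, hEG])
          have := hw s.1 s.2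
          simp only [hH, if_false]
          nlinarith
        · exact absurd hH' hH
    have sum_le : (((P q).zip (P q).tail).map (fun s => dR s.1 s.2)).sum ≤
        (((P q).zip (P q).tail).map
          (fun s => t * (if s ∈ H then dG s.1 s.2 else w s.1 s.2))).sum :=
      List.sum_le_sum pw
    have fact : (((P q).zip (P q).tail).map
          (fun s => t * (if s ∈ H then dG s.1 s.2 else w s.1 s.2))).sum =
        t * (((P q).zip (P q).tail).map
          (fun s => if s ∈ H then dG s.1 s.2 else w s.1 s.2)).sum := by
      induction ((P q).zip (P q).tail) with
      | nil => simp
      | cons a l ih => simp only [List.map_cons, List.sum_cons, ih]; ring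
    have ht0 : (0:ℝ) ≤ t := by linarith
    calc dR q.1 q.2 ≤ _ := key
      _ ≤ _ := sum_le
      _ = _ := fact
      _ ≤ t * (α * dG q.1 q.2) := by
          exact mul_le_mul_of_nonneg_left h5 ht0
      _ = t * α * dG q.1 q.2 := by ring
  · calc (ES ∪ Pset.biUnion (fun q => ((P q).zip (P q).tail).toFinset ∩ EG)).card
        ≤ ES.card + (Pset.biUnion (fun q => ((P q).zip (P q).tail).toFinset ∩ EG)).card :=
          Finset.card_union_le _ _
      _ ≤ ES.card + ∑ q ∈ Pset, (((P q).zip (P q).tail).toFinset ∩ EG).card := by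
          gcongr; exact Finset.card_biUnion_le
      _ ≤ ES.card + ∑ _q ∈ Pset, β := by
          gcongr with q hq
          obtain ⟨_, _, h3, _, _⟩ := hP q hq
          calc (((P q).zip (P q).tail).toFinset ∩ EG).card
              ≤ ((P q).zip (P q).tail).toFinset.card :=
                Finset.card_le_card (Finset.inter_subset_left)
            _ ≤ ((P q).zip (P q).tail).length := List.toFinset_card_le _
            _ ≤ β := by
                rw [List.length_zip, List.length_tail]
                omega
      _ = β * Pset.card + ES.card := by
          rw [Finset.sum_const, smul_eq_mul]; ring
end

section
/- Let n_κ denote the number of vertices of 𝓗_κ[p,l]. Suppose n_0 = 2p, and for κ ≥ 1, n_κ = 2p + (2l−1)·p·n'_{κ−1}, where n'_{κ−1} is the vertex count of 𝓗_{κ−1}[p',l] with √p/ξ ≤ p' ≤ √p/2 and ξ = ξ(√p,l) ≥ 1 non-decreasing in its first argument. Then 2(2l−1)^κ·p^{2−1/2^κ}/ξ(√p,l)^{2κ} ≤ n_κ ≤ 2(2l)^κ·p^{2−1/2^κ}. -/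
/-- Vertex counts of the graphs `𝓗_κ[p,l]`. Let `P κ` be the parameter `p` used
at recursion level `κ` (so `P κ ≥ 1` and `√(P (κ+1))/ξ(√(P (κ+1))) ≤ P κ ≤
√(P (κ+1))/2`, where `ξ ≥ 1` is non-decreasing), and let `m κ = n_κ[P κ, l]`
be the number of vertices, satisfying `m 0 = 2·P 0` and
`m (κ+1) = 2·P (κ+1) + (2l−1)·P (κ+1)·m κ`. Then
`2(2l−1)^κ·(P κ)^{2−1/2^κ}/ξ(√(P κ))^{2κ} ≤ m κ ≤ 2(2l)^κ·(P κ)^{2−1/2^κ}`. -/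
theorem stmt12 (l : ℕ) (hl : 1 ≤ l)
    (ξ : ℝ → ℝ) (hξ1 : ∀ x, 1 ≤ ξ x)
    (hξmono : ∀ x y, 0 < x → x ≤ y → ξ x ≤ ξ y)
    (P : ℕ → ℝ) (hP : ∀ κ, 1 ≤ P κ)
    (hP' : ∀ κ, Real.sqrt (P (κ + 1)) / ξ (Real.sqrt (P (κ + 1))) ≤ P κ ∧
        P κ ≤ Real.sqrt (P (κ + 1)) / 2)
    (m : ℕ → ℝ) (h0 : m 0 = 2 * P 0)
    (hrec : ∀ κ, m (κ + 1) = 2 * P (κ + 1) + (2 * (l : ℝ) - 1) * P (κ + 1) * m κ) :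
    ∀ κ : ℕ,
      2 * (2 * (l : ℝ) - 1) ^ κ * (P κ) ^ (2 - 1 / 2 ^ κ : ℝ)
          / (ξ (Real.sqrt (P κ))) ^ (2 * κ) ≤ m κ ∧
      m κ ≤ 2 * (2 * (l : ℝ)) ^ κ * (P κ) ^ (2 - 1 / 2 ^ κ : ℝ) := by
  have hL : (1:ℝ) ≤ l := by exact_mod_cast hl
  intro κ
  induction κ with
  | zero =>
      have he : ((2:ℝ) - 1 / 2 ^ (0:ℕ)) = 1 := by norm_num
      norm_num [he, Real.rpow_one, h0]
  | succ κ ih =>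
      obtain ⟨ihl, ihu⟩ := ih
      obtain ⟨hp1, hp2⟩ := hP' κ
      have h2l1 : (1:ℝ) ≤ 2*(l:ℝ) - 1 := by linarith
      have hPk1 : 1 ≤ P κ := hP κ
      have hPk0 : (0:ℝ) < P κ := by linarith
      have hPn1 : 1 ≤ P (κ+1) := hP (κ+1)
      have hPn0 : (0:ℝ) < P (κ+1) := by linarith
      set s := Real.sqrt (P (κ+1)) with hs_def
      have hs0 : 0 < s := Real.sqrt_pos.mpr hPn0
      have hs1 : 1 ≤ s := by
        rw [hs_def, show (1:ℝ) = Real.sqrt 1 from (Real.sqrt_one).symm]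
        exact Real.sqrt_le_sqrt hPn1
      set e : ℝ := 2 - 1/2^κ with he_def
      clear_value e
      have h2k : (1:ℝ) ≤ 2^κ := one_le_pow₀ (by norm_num)
      have he1 : 1 ≤ e := by
        have : (1:ℝ)/2^κ ≤ 1 := by
          rw [div_le_one (by positivity)]; exact h2k
        rw [he_def]; linarith
      have he2 : e ≤ 2 := by
        have : (0:ℝ) < 1/2^κ := by positivity
        rw [he_def]; linarith
      have he' : (2 - 1/2^(κ+1) : ℝ) = 1 + e/2 := by
        rw [he_def, pow_succ]
        have : (2:ℝ)^κ ≠ 0 := by positivity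
        field_simp
        ring
      have hsr : s ^ e = P (κ+1) ^ (e/2) := by
        rw [hs_def, Real.sqrt_eq_rpow, ← Real.rpow_mul hPn0.le]
        congr 1
        ring
      -- more facts
      have hPP : P (κ+1) ^ (2 - 1/2^(κ+1) : ℝ) = P (κ+1) * s ^ e := by
        rw [he', hsr, Real.rpow_add hPn0, Real.rpow_one]
      have hse0 : 0 < s ^ e := Real.rpow_pos_of_pos hs0 e
      have hA : (1:ℝ) ≤ (2*(l:ℝ))^κ := one_le_pow₀ (by linarith)
      have hB : (1:ℝ) ≤ (2*(l:ℝ)-1)^κ := one_le_pow₀ h2l1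
      constructor
      · -- lower bound
        have hξs1 : 1 ≤ ξ s := hξ1 s
        have hξs0 : 0 < ξ s := by linarith
        have hξκ0 : 0 < ξ (Real.sqrt (P κ)) := by linarith [hξ1 (Real.sqrt (P κ))]
        have hξle : ξ (Real.sqrt (P κ)) ≤ ξ s := by
          apply hξmono _ _ (Real.sqrt_pos.mpr hPk0)
          apply Real.sqrt_le_sqrt
          calc P κ ≤ s/2 := hp2
            _ ≤ s := by linarith
            _ ≤ P (κ+1) := by nlinarith [Real.sq_sqrt hPn0.le, hs1]
        have h2 : s^e / (ξ s)^2 ≤ P κ ^ e := by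
          have hq0 : 0 < s / ξ s := by positivity
          have hd : (s / ξ s) ^ e = s^e / (ξ s)^e := Real.div_rpow hs0.le hξs0.le e
          have hee : (ξ s)^e ≤ (ξ s)^(2:ℕ) := by
            rw [← Real.rpow_natCast (ξ s) 2]
            exact Real.rpow_le_rpow_of_exponent_le hξs1 (by exact_mod_cast he2)
          calc s^e / (ξ s)^2 ≤ s^e / (ξ s)^e := by
                apply div_le_div_of_nonneg_left hse0.le (Real.rpow_pos_of_pos hξs0 e) hee
            _ = (s / ξ s) ^ e := hd.symm
            _ ≤ P κ ^ e := Real.rpow_le_rpow hq0.le hp1 (by linarith)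
        calc 2 * (2*(l:ℝ)-1)^(κ+1) * P (κ+1) ^ (2 - 1/2^(κ+1) : ℝ) / ξ s ^ (2*(κ+1))
            = (2*(l:ℝ)-1) * P (κ+1) * (2 * (2*(l:ℝ)-1)^κ * (s^e / (ξ s)^2) / ξ s ^ (2*κ)) := by
              rw [hPP, pow_succ, show 2*(κ+1) = 2*κ + 2 by ring, pow_add]
              field_simp
          _ ≤ (2*(l:ℝ)-1) * P (κ+1) * (2 * (2*(l:ℝ)-1)^κ * P κ ^ e / ξ s ^ (2*κ)) := by
              gcongr <;> first | exact ihl | exact ihu | exact h2 | exact hξle | positivity | linarith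
          _ ≤ (2*(l:ℝ)-1) * P (κ+1) * (2 * (2*(l:ℝ)-1)^κ * P κ ^ e / ξ (Real.sqrt (P κ)) ^ (2*κ)) := by
              gcongr <;> first | exact ihl | exact ihu | exact h2 | exact hξle | positivity | linarith
          _ ≤ (2*(l:ℝ)-1) * P (κ+1) * m κ := by
              gcongr <;> first | exact ihl | exact ihu | exact h2 | exact hξle | positivity | linarith
          _ ≤ m (κ+1) := by rw [hrec κ]; linarith
      · -- upper bound
        have h1 : P κ ^ e ≤ P (κ+1) ^ (e/2) / 2 := by
          calc P κ ^ e ≤ (s/2) ^ e := Real.rpow_le_rpow hPk0.le hp2 (by linarith)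
            _ = s^e / 2^e := Real.div_rpow hs0.le (by norm_num) e
            _ ≤ s^e / 2 := by
                apply div_le_div_of_nonneg_left hse0.le (by norm_num)
                calc (2:ℝ) = 2^(1:ℝ) := (Real.rpow_one 2).symm
                  _ ≤ 2^e := Real.rpow_le_rpow_of_exponent_le (by norm_num) he1
            _ = P (κ+1) ^ (e/2) / 2 := by rw [hsr]
        have hξκ0 : 0 < ξ (Real.sqrt (P κ)) := by linarith [hξ1 (Real.sqrt (P κ))]
        have hmk0 : 0 ≤ m κ := by
          calc (0:ℝ) ≤ 2 * (2*(l:ℝ)-1)^κ * P κ ^ e / ξ (Real.sqrt (P κ)) ^ (2*κ) := by positivity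
            _ ≤ m κ := ihl
        have hc : 2 + (2*(l:ℝ)-1)*(2*(l:ℝ))^κ ≤ 2*(2*(l:ℝ))^(κ+1) := by
          rw [pow_succ]
          nlinarith [hA, hL]
        have hX0 : (0:ℝ) ≤ P (κ+1) ^ (2 - 1/2^(κ+1) : ℝ) := (Real.rpow_pos_of_pos hPn0 _).le
        have hPle : P (κ+1) ≤ P (κ+1) ^ (2 - 1/2^(κ+1) : ℝ) := by
          calc P (κ+1) = P (κ+1) ^ (1:ℝ) := (Real.rpow_one _).symm
            _ ≤ P (κ+1) ^ (2 - 1/2^(κ+1) : ℝ) := by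
                apply Real.rpow_le_rpow_of_exponent_le hPn1
                rw [he']; linarith [he1]
        calc m (κ+1) = 2 * P (κ+1) + (2*(l:ℝ)-1) * P (κ+1) * m κ := hrec κ
          _ ≤ 2 * P (κ+1) + (2*(l:ℝ)-1) * P (κ+1) * (2*(2*(l:ℝ))^κ * P κ ^ e) := by
              gcongr <;> first | exact ihl | exact ihu | exact h2 | exact hξle | positivity | linarith
          _ ≤ 2 * P (κ+1) + (2*(l:ℝ)-1) * P (κ+1) * (2*(2*(l:ℝ))^κ * (P (κ+1) ^ (e/2) / 2)) := by
              gcongr <;> first | exact h1 | positivity | linarith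
          _ = 2 * P (κ+1) + (2*(l:ℝ)-1) * (2*(l:ℝ))^κ * (P (κ+1) * P (κ+1) ^ (e/2)) := by ring
          _ = 2 * P (κ+1) + (2*(l:ℝ)-1) * (2*(l:ℝ))^κ * P (κ+1) ^ (2 - 1/2^(κ+1) : ℝ) := by
              rw [hPP, hsr]
          _ ≤ 2 * P (κ+1) ^ (2 - 1/2^(κ+1) : ℝ) + (2*(l:ℝ)-1) * (2*(l:ℝ))^κ * P (κ+1) ^ (2 - 1/2^(κ+1) : ℝ) := by
              gcongr <;> first | exact hPle | positivity | linarith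
          _ = (2 + (2*(l:ℝ)-1)*(2*(l:ℝ))^κ) * P (κ+1) ^ (2 - 1/2^(κ+1) : ℝ) := by ring
          _ ≤ 2*(2*(l:ℝ))^(κ+1) * P (κ+1) ^ (2 - 1/2^(κ+1) : ℝ) :=
              mul_le_mul_of_nonneg_right hc hX0
end

section
/- For every real b with 2 ≤ b ≤ 2l−1 (l ≥ 1 integer) and integer κ ≥ 2, if b − 1 ≥ (2l−1)/κ then (1 − (b−1)/(2l−1))^κ ≤ (1 − 1/κ)^κ ≤ 1/4 for κ ≥ 2, and consequently (2lκ+1)(2l−1)^κ + 2(2l−b)^κ ≥ (2lκ+1)(2l−1)^κ · (1 + 1/(6lκ)). -/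
/-!
Since `b - 1 = ⌊(2l-1)/κ⌋ ≤ (2l-1)/κ`, the ratio `(2l-b)/(2l-1)` is at least `1 - 1/κ`, so
`2(2l-b)^κ/(2l-1)^κ ≥ 2(1-1/κ)^κ`. Convexity of `x ↦ (1/4)^x` gives `(1/4)^x ≤ 1 - x` on
`[0, 1/2]`, whence `(1-1/κ)^κ ≥ 1/4`, and `2/(4(2lκ+1)) ≥ 1/(6lκ)` as soon as `lκ ≥ 1`.
-/

open Real

lemma quarter_rpow_le_one_sub {x : ℝ} (h0 : 0 ≤ x) (h1 : x ≤ 1 / 2) :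
    (1 / 4 : ℝ) ^ x ≤ 1 - x := by
  have hconv := (convexOn_rpow_left (b := 1 / 4) (by norm_num)).2 (Set.mem_univ 0)
    (Set.mem_univ (1 / 2)) (by linarith : 0 ≤ 1 - 2 * x) (by linarith : 0 ≤ 2 * x) (by ring)
  have hhalf : (1 / 4 : ℝ) ^ (1 / 2 : ℝ) = 1 / 2 := by
    rw [show (1 / 4 : ℝ) = (1 / 2) ^ (2 : ℝ) by norm_num, ← rpow_mul (by norm_num)]
    norm_num
  simp only [smul_eq_mul, mul_zero, zero_add, rpow_zero, hhalf] at hconv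
  rw [show 2 * x * (1 / 2) = x by ring] at hconv
  linarith

lemma quarter_le_one_sub_one_div_pow {n : ℕ} (hn : 2 ≤ n) :
    (1 / 4 : ℝ) ≤ (1 - 1 / (n : ℝ)) ^ n := by
  have hn' : (2 : ℝ) ≤ n := by exact_mod_cast hn
  have hinv : 1 / (n : ℝ) ≤ 1 / 2 := one_div_le_one_div_of_le two_pos hn'
  calc (1 / 4 : ℝ) = ((1 / 4 : ℝ) ^ (1 / (n : ℝ))) ^ n := by
        rw [← rpow_natCast, ← rpow_mul (by norm_num), one_div_mul_cancel (by positivity),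
          rpow_one]
    _ ≤ (1 - 1 / (n : ℝ)) ^ n :=
        pow_le_pow_left₀ (by positivity) (quarter_rpow_le_one_sub (by positivity) hinv) n

lemma one_sub_one_div_natCast_nonneg (k : ℕ) : 0 ≤ 1 - 1 / (k : ℝ) := by
  rcases k.eq_zero_or_pos with rfl | hk
  · simp
  · rw [sub_nonneg, div_le_one (by positivity)]
    exact_mod_cast hk

lemma mul_one_sub_one_div_le_sub_nat_div (m k : ℕ) :
    (m : ℝ) * (1 - 1 / k) ≤ m - ((m / k : ℕ) : ℝ) := by
  have : ((m / k : ℕ) : ℝ) ≤ m / k := Nat.cast_div_le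
  rw [mul_one_sub, mul_one_div]
  linarith

lemma pow_mul_one_sub_one_div_pow_le_sub_nat_div_pow (m k : ℕ) :
    (m : ℝ) ^ k * (1 - 1 / (k : ℝ)) ^ k ≤ ((m : ℝ) - ((m / k : ℕ) : ℝ)) ^ k := by
  rw [← mul_pow]
  exact pow_le_pow_left₀ (mul_nonneg m.cast_nonneg (one_sub_one_div_natCast_nonneg k))
    (mul_one_sub_one_div_le_sub_nat_div m k) k

lemma mul_one_add_le_add_of_le_div {X c y : ℝ} (hX : 0 < X) (h : c ≤ y / X) :
    X * (1 + c) ≤ X + y := by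
  rw [le_div_iff₀ hX] at h
  linarith

/-- For integers `l ≥ 1`, `κ ≥ 2` and `b = ⌊(2l−1)/κ⌋ + 1`:
`2(2l−b)^κ/((2lκ+1)(2l−1)^κ) ≥ (2/(2lκ+1))·(1−1/κ)^κ ≥ 1/(6lκ)`, and
consequently
`(2lκ+1)(2l−1)^κ + 2(2l−b)^κ ≥ (2lκ+1)(2l−1)^κ·(1 + 1/(6lκ))`. -/
theorem stmt14 (l κ : ℕ) (hl : 1 ≤ l) (hκ : 2 ≤ κ)
    (b : ℕ) (hb : b = (2 * l - 1) / κ + 1) :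
    1 / (6 * (l : ℝ) * κ) ≤ 2 / (2 * (l : ℝ) * κ + 1) * (1 - 1 / (κ : ℝ)) ^ κ ∧
    2 / (2 * (l : ℝ) * κ + 1) * (1 - 1 / (κ : ℝ)) ^ κ ≤
      2 * (2 * (l : ℝ) - b) ^ κ / ((2 * (l : ℝ) * κ + 1) * (2 * (l : ℝ) - 1) ^ κ) ∧
    (2 * (l : ℝ) * κ + 1) * (2 * (l : ℝ) - 1) ^ κ * (1 + 1 / (6 * (l : ℝ) * κ)) ≤
      (2 * (l : ℝ) * κ + 1) * (2 * (l : ℝ) - 1) ^ κ + 2 * (2 * (l : ℝ) - b) ^ κ := by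
  have hL : (1 : ℝ) ≤ l := by exact_mod_cast hl
  have hlκ : (1 : ℝ) ≤ l * κ := by exact_mod_cast Nat.one_le_iff_ne_zero.2 (by positivity)
  have hA : (0 : ℝ) < 2 * l * κ + 1 := by positivity
  have hD : (0 : ℝ) < (2 * l - 1) ^ κ := pow_pos (by linarith) κ
  have hm : ((2 * l - 1 : ℕ) : ℝ) = 2 * l - 1 := by
    rw [Nat.cast_sub (by omega), Nat.cast_mul, Nat.cast_ofNat, Nat.cast_one]
  have hbase : (2 * (l : ℝ) - 1) ^ κ * (1 - 1 / (κ : ℝ)) ^ κ ≤ (2 * (l : ℝ) - b) ^ κ := by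
    have hsub : 2 * (l : ℝ) - b = ((2 * l - 1 : ℕ) : ℝ) - ((2 * l - 1) / κ : ℕ) := by
      rw [hm, hb]; push_cast; ring
    rw [hsub, ← hm]
    exact pow_mul_one_sub_one_div_pow_le_sub_nat_div_pow (2 * l - 1) κ
  have hquarter := quarter_le_one_sub_one_div_pow hκ
  have hlower :
      1 / (6 * (l : ℝ) * κ) ≤ 2 / (2 * (l : ℝ) * κ + 1) * (1 - 1 / (κ : ℝ)) ^ κ := by
    rw [div_mul_eq_mul_div, div_le_div_iff₀ (by positivity) hA]
    nlinarith
  have hratio : 2 / (2 * (l : ℝ) * κ + 1) * (1 - 1 / (κ : ℝ)) ^ κ ≤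
      2 * (2 * (l : ℝ) - b) ^ κ / ((2 * (l : ℝ) * κ + 1) * (2 * (l : ℝ) - 1) ^ κ) := by
    rw [div_mul_eq_mul_div, div_le_div_iff₀ hA (mul_pos hA hD)]
    nlinarith
  exact ⟨hlower, hratio,
    mul_one_add_le_add_of_le_div (mul_pos hA hD) (hlower.trans hratio)⟩
end

section
/- Let A₀ ⊇ A₁ ⊇ ⋯ be random subsets of an n-element vertex set where A₀ = V and A_{i+1} is obtained from A_i by keeping each element independently with probability δ·n^{−λ_i/k}. For any vertex u and level j, the bunch B_j(u) = { v ∈ A_j : d(u,v) < d(u, p_{j+1}(u)) } (where p_{j+1}(u) is the nearest vertex of A_{j+1} to u) satisfies E[|B_j(u)|] ≤ (1/δ)·n^{λ_j/k} − 1. -/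
open MeasureTheory Finset
open scoped ENNReal

/-!
A vertex `v ∈ A_j` lies in the bunch iff none of the vertices of `A_j` at least as close to `u`
as `v` is kept, an event of probability `(1 - q)^r` where `r` is the rank of `v` by distance.
Distinct distances make these ranks distinct positive integers, so by linearity the expected
bunch size is at most `∑_{i ≥ 1} (1 - q)^i = 1/q - 1`.
-/

lemma MeasureTheory.Measure.pi_setOf_forall_mem {ι α : Type*} [Fintype ι] [MeasurableSpace α]
    (μ : Measure α) [IsProbabilityMeasure μ] (s : Finset ι) (t : Set α) :
    Measure.pi (fun _ : ι => μ) {ω | ∀ x ∈ s, ω x ∈ t} = μ t ^ #s := by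
  classical
  have : {ω : ι → α | ∀ x ∈ s, ω x ∈ t} = Set.univ.pi fun x => if x ∈ s then t else Set.univ := by
    ext ω
    simp only [Set.mem_pi, Set.mem_univ, true_imp_iff]
    refine forall_congr' fun x => ?_
    split_ifs <;> simp_all
  rw [this, Measure.pi_pi]
  simp [apply_ite μ, prod_ite_mem]

lemma ENNReal.sum_pow_le_of_injOn {ι : Type*} {s : Finset ι} {g : ι → ℕ}
    (hg : Set.InjOn g s) (hg0 : ∀ v ∈ s, 0 < g v) (r : ℝ≥0∞) :
    ∑ v ∈ s, r ^ g v ≤ r * (1 - r)⁻¹ := by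
  have hinj : Set.InjOn (fun v => g v - 1) s := fun v hv w hw h => by
    have := hg0 v hv; have := hg0 w hw
    exact hg hv hw (by simp only at h; omega)
  calc ∑ v ∈ s, r ^ g v = ∑ i ∈ s.image (fun v => g v - 1), r ^ (i + 1) := by
        rw [sum_image hinj]
        exact sum_congr rfl fun v hv => by rw [Nat.sub_add_cancel (hg0 v hv)]
    _ ≤ ∑' i, r ^ (i + 1) := ENNReal.sum_le_tsum _
    _ = r * (1 - r)⁻¹ := ENNReal.tsum_geometric_add_one r

section

variable {ι β : Type*} [LinearOrder β]

-- `ω` is the indicator function of the sample `A_{j+1}`.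
def bunch (f : ι → β) (s : Finset ι) (ω : ι → Bool) : Finset ι :=
  s.filter fun v => ∀ x ∈ s, ω x = true → f v < f x

lemma mem_bunch_iff {f : ι → β} {s : Finset ι} {ω : ι → Bool} {v : ι} (hv : v ∈ s) :
    v ∈ bunch f s ω ↔ ∀ x ∈ s.filter (fun x => f x ≤ f v), ω x = false := by
  simp only [bunch, mem_filter, hv, true_and, and_imp]
  exact forall₂_congr fun x _ => by rw [← not_lt, ← Bool.not_eq_true]; exact not_imp_not.symm

lemma injOn_card_filter_le {f : ι → β} {s : Finset ι} (hf : Set.InjOn f s) :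
    Set.InjOn (fun v => #(s.filter fun x => f x ≤ f v)) s := by
  suffices key : ∀ v ∈ s, ∀ w ∈ s, f v ≤ f w →
      #(s.filter fun x => f x ≤ f v) = #(s.filter fun x => f x ≤ f w) → v = w by
    intro v hv w hw h
    rcases le_total (f v) (f w) with hvw | hwv
    exacts [key v hv w hw hvw h, (key w hw v hv hwv h.symm).symm]
  intro v hv w hw hvw h
  have hsub : s.filter (fun x => f x ≤ f v) ⊆ s.filter (fun x => f x ≤ f w) :=
    monotone_filter_right s fun _ _ hx => hx.trans hvw
  have hw' : w ∈ s.filter (fun x => f x ≤ f v) := by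
    rw [eq_of_subset_of_card_le hsub h.ge]
    exact mem_filter.2 ⟨hw, le_rfl⟩
  exact hf hv hw (hvw.antisymm (mem_filter.1 hw').2)

lemma lintegral_card_bunch [Fintype ι] (f : ι → β) (s : Finset ι) (P : PMF Bool) :
    ∫⁻ ω, (#(bunch f s ω) : ℝ≥0∞) ∂Measure.pi (fun _ => P.toMeasure)
      = ∑ v ∈ s, P false ^ #(s.filter fun x => f x ≤ f v) := by
  have hcard : ∀ ω, (#(bunch f s ω) : ℝ≥0∞) = ∑ v ∈ s, {ω | v ∈ bunch f s ω}.indicator 1 ω := by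
    intro ω
    rw [bunch, card_filter, Nat.cast_sum]
    exact sum_congr rfl fun v hv => by simp [Set.indicator, bunch, hv]
  simp_rw [hcard]
  rw [lintegral_finsetSum _ fun v _ => Measurable.of_discrete]
  refine sum_congr rfl fun v hv => ?_
  have hset : {ω : ι → Bool | v ∈ bunch f s ω}
      = {ω | ∀ x ∈ s.filter (fun x => f x ≤ f v), ω x ∈ ({false} : Set Bool)} := by
    ext ω; exact mem_bunch_iff hv
  rw [lintegral_indicator_one MeasurableSet.of_discrete, hset, Measure.pi_setOf_forall_mem,
    P.toMeasure_apply_singleton _ MeasurableSet.of_discrete]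

lemma lintegral_card_bunch_le [Fintype ι] {f : ι → β} {s : Finset ι} (hf : Set.InjOn f s)
    (P : PMF Bool) (hP : P true ≠ 0) :
    ∫⁻ ω, (#(bunch f s ω) : ℝ≥0∞) ∂Measure.pi (fun _ => P.toMeasure) ≤ (P true)⁻¹ - 1 := by
  have hfalse : P false = 1 - P true := by
    rw [← P.tsum_coe, tsum_bool, ENNReal.add_sub_cancel_right (P.apply_ne_top _)]
  calc _ = ∑ v ∈ s, P false ^ #(s.filter fun x => f x ≤ f v) := lintegral_card_bunch f s P
    _ ≤ P false * (1 - P false)⁻¹ :=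
      ENNReal.sum_pow_le_of_injOn (injOn_card_filter_le hf)
        (fun v hv => card_pos.2 ⟨v, mem_filter.2 ⟨hv, le_rfl⟩⟩) _
    _ = (P true)⁻¹ - 1 := by
      rw [hfalse, ENNReal.sub_sub_cancel ENNReal.one_ne_top (P.coe_le_one true),
        ENNReal.sub_mul fun _ _ => ENNReal.inv_ne_top.2 hP, one_mul,
        ENNReal.mul_inv_cancel hP (P.apply_ne_top _)]

end

/-- Expected bunch size. `Aj ⊆ V` is a level set; `A_{j+1}` is obtained by
keeping each vertex of `Aj` independently with probability
`q = δ·n^{−λ/k}` (the sample space is `V → Bool` with the product Bernoulli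
measure). Distances from `u` to vertices of `Aj` are distinct (ties broken).
The bunch of `u` consists of those `v ∈ Aj` strictly closer to `u` than every
kept vertex. Then its expected size is at most `(1/δ)·n^{λ/k} − 1`. -/
theorem stmt17 {V : Type*} [Fintype V] [DecidableEq V]
    (d : V → V → ℝ) (u : V) (Aj : Finset V)
    (hinj : ∀ v ∈ Aj, ∀ w ∈ Aj, d u v = d u w → v = w)
    (n : ℕ) (hn : n = Fintype.card V)
    (δ lam k : ℝ) (hδ0 : 0 < δ)
    (q : ℝ≥0∞) (hq : q = ENNReal.ofReal (δ * (n : ℝ) ^ (-(lam / k)))) (hq1 : q ≤ 1)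
    (μ : Measure (V → Bool))
    (hμ : μ = Measure.pi fun _ => (PMF.ofFintype (fun b => cond b q (1 - q)) (by simp [hq1])).toMeasure) :
    ∫⁻ ω, ((Aj.filter
        (fun v => ∀ x ∈ Aj, ω x = true → d u v < d u x)).card : ℝ≥0∞) ∂μ
      ≤ ENNReal.ofReal ((1 / δ) * (n : ℝ) ^ (lam / k) - 1) := by
  subst hμ
  rcases n.eq_zero_or_pos with hn0 | hnpos
  · have : IsEmpty V := Fintype.card_eq_zero_iff.mp (hn ▸ hn0)
    simp [Finset.eq_empty_of_isEmpty Aj]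
  have ha : 0 < δ * (n : ℝ) ^ (-(lam / k)) := by positivity
  have hq0 : q ≠ 0 := hq ▸ (ENNReal.ofReal_pos.2 ha).ne'
  have hbunch : ∀ ω, Aj.filter (fun v => ∀ x ∈ Aj, ω x = true → d u v < d u x) = bunch (d u) Aj ω :=
    fun ω => by ext v; simp only [bunch, mem_filter]
  simp_rw [hbunch]
  calc _ ≤ q⁻¹ - 1 := lintegral_card_bunch_le (fun v hv w hw => hinj v hv w hw) _ hq0
    _ = ENNReal.ofReal ((1 / δ) * (n : ℝ) ^ (lam / k) - 1) := by
      rw [hq, ← ENNReal.ofReal_inv_of_pos ha, ← ENNReal.ofReal_one,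
        ← ENNReal.ofReal_sub _ zero_le_one, Real.rpow_neg (Nat.cast_nonneg n), mul_inv, inv_inv,
        one_div]
end

section
/- Let f : {1,…,T} → {1,…,n} be the monotonically increasing function f(i) = ⌊n^{1−1/2^i}⌋ and define f⁻¹(j) = min{ i : f(i) ≥ j }. Then for every j with 1 ≤ j ≤ f(T), f⁻¹(j) = ⌈log₂(1/(1−δ_j))⌉ where δ_j = log j / log n, and f(f⁻¹(j)) ≤ n^{(1+δ_j)/2}. -/
/-- For `f(i) = ⌊n^{1−1/2^i}⌋` (increasing in `i`) and
`f⁻¹(j) = min{ i : f(i) ≥ j }`, for every `j` with `1 ≤ j ≤ f(T)` one has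
`f⁻¹(j) = ⌈log₂(1/(1−δ_j))⌉` where `δ_j = log j / log n`, and
`f(f⁻¹(j)) ≤ n^{(1+δ_j)/2}`. -/
theorem stmt19 (n T : ℕ) (hn : 2 ≤ n) (hT : 1 ≤ T)
    (f : ℕ → ℕ) (hf : ∀ i, f i = ⌊(n : ℝ) ^ (1 - 1 / 2 ^ i : ℝ)⌋₊)
    (finv : ℕ → ℕ) (hfinv : ∀ j, finv j = sInf {i : ℕ | j ≤ f i})
    (j : ℕ) (hj1 : 1 ≤ j) (hjT : j ≤ f T)
    (δj : ℝ) (hδj : δj = Real.log j / Real.log n) :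
    finv j = ⌈Real.logb 2 (1 / (1 - δj))⌉₊ ∧
      (f (finv j) : ℝ) ≤ (n : ℝ) ^ ((1 + δj) / 2 : ℝ) := by
  have hn1 : (1:ℝ) < n := by exact_mod_cast lt_of_lt_of_le one_lt_two hn
  have hn0 : (0:ℝ) < n := by linarith
  have hlogn : 0 < Real.log n := Real.log_pos hn1
  have hjpos : (0:ℝ) < j := by exact_mod_cast hj1
  -- j < n
  have hjn : (j:ℝ) < n := by
    have h1 : (n:ℝ) ^ ((1 - 1 / 2 ^ T : ℝ)) < (n:ℝ) ^ (1:ℝ) := by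
      apply Real.rpow_lt_rpow_of_exponent_lt hn1
      have : (0:ℝ) < 1 / 2 ^ T := by positivity
      linarith
    rw [Real.rpow_one] at h1
    have hfT : f T < n := by
      rw [hf T]
      exact (Nat.floor_lt (Real.rpow_nonneg hn0.le _)).mpr h1
    exact_mod_cast lt_of_le_of_lt hjT hfT
  have hδ0 : 0 ≤ δj := by
    rw [hδj]
    exact div_nonneg (Real.log_nonneg (by exact_mod_cast hj1)) hlogn.le
  have hδ1 : δj < 1 := by
    rw [hδj, div_lt_one hlogn]
    exact Real.log_lt_log hjpos hjn
  have h1δ : 0 < 1 - δj := by linarith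
  have hnd : (n:ℝ) ^ δj = j := by
    rw [hδj, Real.rpow_def_of_pos hn0, mul_comm, div_mul_cancel₀ _ (ne_of_gt hlogn),
      Real.exp_log hjpos]
  set x := Real.logb 2 (1 / (1 - δj)) with hxdef
  have hx0 : 0 ≤ x := by
    apply Real.logb_nonneg one_lt_two
    rw [le_div_iff₀ h1δ]; linarith
  have key : ∀ i : ℕ, (j ≤ f i ↔ x ≤ (i:ℝ)) := by
    intro i
    rw [hf i, Nat.le_floor_iff (Real.rpow_nonneg hn0.le _), ← hnd,
      Real.rpow_le_rpow_left_iff hn1]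
    have h2i : (0:ℝ) < 2 ^ i := by positivity
    have hlb : x ≤ (i:ℝ) ↔ 1 / (1 - δj) ≤ (2:ℝ) ^ (i:ℝ) :=
      Real.logb_le_iff_le_rpow one_lt_two (by positivity)
    rw [hlb, Real.rpow_natCast, div_le_iff₀ h1δ,
      show (δj ≤ 1 - 1 / 2 ^ i) ↔ (1 / 2 ^ i ≤ 1 - δj) from by
        constructor <;> intro h <;> linarith,
      div_le_iff₀ h2i, mul_comm]
  have hset : {i : ℕ | j ≤ f i} = {i : ℕ | ⌈x⌉₊ ≤ i} := by
    ext i; simp only [Set.mem_setOf_eq, key i, Nat.ceil_le]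
  have hinv : finv j = ⌈x⌉₊ := by
    rw [hfinv j, hset]
    refine le_antisymm (Nat.sInf_le (by simp; exact Nat.le_ceil x)) ?_
    have h := Nat.sInf_mem (⟨⌈x⌉₊, by simp; exact Nat.le_ceil x⟩ : {i : ℕ | ⌈x⌉₊ ≤ i}.Nonempty)
    simpa using h
  refine ⟨hinv, ?_⟩
  rw [hinv, hf]
  set m := ⌈x⌉₊ with hm
  have hmle : (m:ℝ) ≤ x + 1 := le_of_lt (Nat.ceil_lt_add_one hx0)
  have h2x : (2:ℝ) ^ x = 1 / (1 - δj) :=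
    Real.rpow_logb two_pos (by norm_num) (by positivity)
  have h2m : (2:ℝ) ^ m ≤ 2 / (1 - δj) := by
    have : (2:ℝ) ^ (m:ℝ) ≤ 2 ^ (x + 1) :=
      Real.rpow_le_rpow_of_exponent_le one_le_two hmle
    rw [Real.rpow_natCast] at this
    calc (2:ℝ) ^ m ≤ 2 ^ (x + 1) := this
      _ = 2 ^ x * 2 := by rw [Real.rpow_add two_pos, Real.rpow_one]
      _ = 2 / (1 - δj) := by rw [h2x]; ring
  have hinv2 : (1 - δj) / 2 ≤ 1 / 2 ^ m := by
    have := one_div_le_one_div_of_le (by positivity : (0:ℝ) < 2 ^ m) h2m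
    rwa [one_div_div] at this
  calc (↑⌊(n:ℝ) ^ (1 - 1 / 2 ^ m : ℝ)⌋₊ : ℝ) ≤ (n:ℝ) ^ (1 - 1 / 2 ^ m : ℝ) :=
        Nat.floor_le (Real.rpow_nonneg hn0.le _)
    _ ≤ (n:ℝ) ^ ((1 + δj) / 2 : ℝ) := by
        apply Real.rpow_le_rpow_of_exponent_le hn1.le
        linarith
end
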